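/- arXiv:2511.18553 — 5 statements merged into one kernel-verified Lean document; each statement's English description precedes it below -/
import Mathlib

section
/- Let Z ∈ ℝ^{q×q} be symmetric positive semidefinite with rank p ≤ q, and let W ∈ ℝ^{q'×q} with q' ≥ q have rank q. Then the pseudo-determinant (product of non-zero eigenvalues) satisfies det*(W Z W^T) = det*(Z) · det((W U_p)^T (W U_p)), where U_p ∈ ℝ^{q×p} is the matrix whose columns are orthonormal eigenvectors of Z associated to its non-zero eigenvalues. -/
open Matrix Finset

/-- The pseudo-determinant of a real symmetric matrix: the product of its
non-zero eigenvalues (and `0` for non-symmetric matrices, by convention). -/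
noncomputable def pdet {n : Type*} [Fintype n] [DecidableEq n]
    (M : Matrix n n ℝ) : ℝ :=
  if h : M.IsHermitian then
    ∏ i ∈ Finset.univ.filter (fun i => h.eigenvalues i ≠ 0), h.eigenvalues i
  else 0

/-!
For symmetric `M` with eigenvalues `λᵢ`, `det (X + M) = ∏ (X + λᵢ)`, so the pseudo-determinant
of `M` is the lowest non-zero coefficient of this polynomial. Sylvester's identity
`X ^ |n| · det (X + A B) = X ^ |m| · det (X + B A)` shows that this coefficient is the same for
`A B` and `B A`; when `B A` is invertible it is `det (B A)`. Writing
`W Z Wᵀ = (W U) Λ (W U)ᵀ` and `Z = U Λ Uᵀ`, both pseudo-determinants are determinants of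
`Λ (W U)ᵀ (W U)` and `Λ Uᵀ U = Λ`, which are invertible because `W U` is injective.
-/

namespace Polynomial

theorem trailingCoeff_one {R : Type*} [Semiring R] : (1 : R[X]).trailingCoeff = 1 := by
  rw [trailingCoeff, natTrailingDegree_one, coeff_one_zero]

theorem trailingCoeff_X_pow {R : Type*} [Semiring R] [Nontrivial R] (n : ℕ) :
    (X ^ n : R[X]).trailingCoeff = 1 := by
  rw [← monomial_one_right_eq_X_pow, trailingCoeff, natTrailingDegree_monomial one_ne_zero,
    coeff_monomial_same]

theorem trailingCoeff_X_sub_C {R : Type*} [Ring R] [Nontrivial R] [DecidableEq R] (a : R) :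
    (X - C a).trailingCoeff = if a = 0 then 1 else -a := by
  split_ifs with ha
  · simpa [ha] using trailingCoeff_X_pow (R := R) 1
  · rw [trailingCoeff_eq_coeff_zero] <;> simp [ha]

theorem trailingCoeff_prod {R ι : Type*} [CommSemiring R] [NoZeroDivisors R]
    (s : Finset ι) (f : ι → R[X]) :
    (∏ i ∈ s, f i).trailingCoeff = ∏ i ∈ s, (f i).trailingCoeff :=
  map_prod (⟨⟨trailingCoeff, trailingCoeff_one⟩, trailingCoeff_mul⟩ : R[X] →* R) f s

end Polynomial

open Polynomial

namespace Matrix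

section PseudoDeterminant

variable {m n : Type*} [Fintype m] [Fintype n] [DecidableEq n]

theorem trailingCoeff_charpoly_neg {R : Type*} [CommRing R] [IsDomain R] {N : Matrix n n R}
    (hN : N.det ≠ 0) : (-N).charpoly.trailingCoeff = N.det := by
  have hcoeff : (-N).charpoly.coeff 0 = N.det := by
    rw [← mul_right_inj' (pow_ne_zero (Fintype.card n) (neg_ne_zero.2 one_ne_zero)),
      ← det_eq_sign_charpoly_coeff, det_neg]
  rw [trailingCoeff_eq_coeff_zero (hcoeff ▸ hN), hcoeff]

theorem IsHermitian.pdet_eq_trailingCoeff_charpoly_neg {M : Matrix n n ℝ} (hM : M.IsHermitian) :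
    pdet M = (-M).charpoly.trailingCoeff := by
  rw [← cfc_neg_id (R := ℝ) M, hM.charpoly_cfc_eq, trailingCoeff_prod, pdet, dif_pos hM,
    prod_filter]
  refine prod_congr rfl fun i _ => ?_
  rw [trailingCoeff_X_sub_C]
  simp [ite_not]

theorem pdet_mul_comm [DecidableEq m] (A : Matrix m n ℝ) (B : Matrix n m ℝ)
    (hAB : (A * B).IsHermitian) (hBA : (B * A).det ≠ 0) : pdet (A * B) = (B * A).det := by
  have h := congrArg trailingCoeff (charpoly_mul_comm' (-A) B)
  rw [trailingCoeff_mul, trailingCoeff_mul, trailingCoeff_X_pow, trailingCoeff_X_pow, one_mul,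
    one_mul, Matrix.neg_mul, Matrix.mul_neg] at h
  rw [hAB.pdet_eq_trailingCoeff_charpoly_neg, h, trailingCoeff_charpoly_neg hBA]

theorem pdet_mul_mul_transpose [DecidableEq m] (A : Matrix m n ℝ) {D : Matrix n n ℝ}
    (hD : D.IsHermitian) (hdet : (D * (Aᵀ * A)).det ≠ 0) :
    pdet (A * D * Aᵀ) = D.det * (Aᵀ * A).det := by
  have hHerm : (A * (D * Aᵀ)).IsHermitian := by
    simpa only [conjTranspose_eq_transpose_of_trivial, Matrix.mul_assoc] using
      isHermitian_mul_mul_conjTranspose A hD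
  rw [Matrix.mul_assoc, pdet_mul_comm _ _ hHerm (by rwa [Matrix.mul_assoc]), Matrix.mul_assoc,
    det_mul]

theorem det_transpose_mul_self_ne_zero {A : Matrix m n ℝ} (hA : Function.Injective A.mulVec) :
    (Aᵀ * A).det ≠ 0 := by
  simpa only [conjTranspose_eq_transpose_of_trivial] using
    (PosDef.conjTranspose_mul_self A hA).det_pos.ne'

end PseudoDeterminant

theorem mulVec_injective_of_mul_eq_one {m n R : Type*} [Fintype m] [Fintype n] [DecidableEq n]
    [Semiring R] {A : Matrix m n R} {B : Matrix n m R} (h : B * A = 1) :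
    Function.Injective A.mulVec :=
  Function.LeftInverse.injective (g := B.mulVec) fun v => by rw [mulVec_mulVec, h, one_mulVec]

theorem mulVec_injective_of_rank_eq_card {m n K : Type*} [Fintype n] [Field K]
    (A : Matrix m n K) (hA : A.rank = Fintype.card n) : Function.Injective A.mulVec := by
  have h := LinearMap.finrank_range_add_finrank_ker A.mulVecLin
  rw [← rank, hA, Module.finrank_fintype_fun_eq_card, Nat.add_eq_left,
    Submodule.finrank_eq_zero, LinearMap.ker_eq_bot] at h
  exact h

end Matrix

theorem pdet_conj_general {q q' p : ℕ}
    (Z : Matrix (Fin q) (Fin q) ℝ)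
    (Λ : Matrix (Fin p) (Fin p) ℝ)
    (hΛ : ∃ dvec : Fin p → ℝ, (∀ i, 0 < dvec i) ∧ Λ = Matrix.diagonal dvec)
    (U : Matrix (Fin q) (Fin p) ℝ) (hU : Uᵀ * U = 1)
    (hZdecomp : Z = U * Λ * Uᵀ)
    (W : Matrix (Fin q') (Fin q) ℝ) (hW : W.rank = q) :
    pdet (W * Z * Wᵀ) = pdet Z * ((W * U)ᵀ * (W * U)).det := by
  obtain ⟨d, hd, rfl⟩ := hΛ
  have hΛ : (diagonal d).det ≠ 0 := by
    rw [det_diagonal]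
    exact (prod_pos fun i _ => hd i).ne'
  have hWU : ((W * U)ᵀ * (W * U)).det ≠ 0 := by
    refine det_transpose_mul_self_ne_zero ?_
    simpa only [Function.comp_def, mulVec_mulVec] using
      (W.mulVec_injective_of_rank_eq_card (by rw [hW, Fintype.card_fin])).comp
        (mulVec_injective_of_mul_eq_one hU)
  have hpdetZ : pdet Z = (diagonal d).det := by
    rw [hZdecomp, pdet_mul_mul_transpose U (isHermitian_diagonal d) (by rwa [hU, Matrix.mul_one]),
      hU, det_one, mul_one]
  have hconj : W * Z * Wᵀ = W * U * diagonal d * (W * U)ᵀ := by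
    simp only [hZdecomp, transpose_mul, Matrix.mul_assoc]
  rw [hconj, hpdetZ, pdet_mul_mul_transpose _ (isHermitian_diagonal d)
    (by rw [det_mul]; exact mul_ne_zero hΛ hWU)]

/-- Let `Z = U Λ Uᵀ` be symmetric PSD of rank `p ≤ q` (with `Λ` diagonal with
positive entries and `U` having orthonormal columns), and let `W ∈ ℝ^{q'×q}`
with `q' ≥ q` have rank `q`. Then
`det*(W Z Wᵀ) = det*(Z) · det((W U)ᵀ (W U))`. -/
theorem pdet_conj {q q' p : ℕ} (hq : q ≤ q') (hpq : p ≤ q)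
    (Z : Matrix (Fin q) (Fin q) ℝ) (hZ : Z.PosSemidef) (hrank : Z.rank = p)
    (Λ : Matrix (Fin p) (Fin p) ℝ)
    (hΛ : ∃ dvec : Fin p → ℝ, (∀ i, 0 < dvec i) ∧ Λ = Matrix.diagonal dvec)
    (U : Matrix (Fin q) (Fin p) ℝ) (hU : Uᵀ * U = 1)
    (hZdecomp : Z = U * Λ * Uᵀ)
    (W : Matrix (Fin q') (Fin q) ℝ) (hW : W.rank = q) :
    pdet (W * Z * Wᵀ) = pdet Z * ((W * U)ᵀ * (W * U)).det :=
  pdet_conj_general Z Λ hΛ U hU hZdecomp W hW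
end

section
/- Let A be a d×d real matrix and let i_1 > i_2 > ... > i_t ≥ 1 be natural numbers (t ≥ 2). For each k define P_{i_k} ∈ ℝ^{i_1 d × d} as the block matrix whose j-th d×d block (from the top, j = 1,...,i_1) equals A^{i_k − j} for j ≤ i_k and 0 for j > i_k, and let P = [P_{i_1} P_{i_2} ... P_{i_t}] ∈ ℝ^{i_1 d × t d}. Then det(P^T P) = (∏_{k=1}^{t−1} det(∑_{l=0}^{i_k − i_{k+1} − 1} (A^l)^T A^l)) · det(∑_{l=0}^{i_t − 1} (A^l)^T A^l). In particular det(P^T P) ≥ 1. -/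
/-!
Right multiplication of `P` by a block unitriangular matrix replaces each block column
`P_{i_k}` by `P_{i_k} - P_{i_{k+1}} A^{i_k - i_{k+1}}`, which keeps only the window of block rows
`i_{k+1} ≤ j < i_k` (all rows `j < i_t` for the last column). These windows are disjoint, so the
new Gram matrix is block diagonal, with diagonal blocks `∑_{l < i_k - i_{k+1}} (A^l)ᵀ A^l`.
Each of them is `1` plus a positive semidefinite matrix, so its determinant is at least `1`.
-/

open Matrix Finset

section PowWindow

variable {R : Type*}

/-- Viewed as a block column indexed by `j`, `powWindow A 0 i` is the paper's `P_i`. -/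
def powWindow [MonoidWithZero R] (A : R) (a b j : ℕ) : R :=
  if a ≤ j ∧ j < b then A ^ (b - 1 - j) else 0

theorem powWindow_sub_mul_pow [Ring R] (A : R) {b c : ℕ} (hcb : c ≤ b) (j : ℕ) :
    powWindow A 0 b j - powWindow A 0 c j * A ^ (b - c) = powWindow A c b j := by
  unfold powWindow
  by_cases hjc : j < c
  · rw [if_pos ⟨j.zero_le, hjc.trans_le hcb⟩, if_pos ⟨j.zero_le, hjc⟩, if_neg (by omega),
      ← pow_add, show c - 1 - j + (b - c) = b - 1 - j by omega, sub_self]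
  · simp only [Nat.zero_le, true_and, hjc, if_false, zero_mul, sub_zero, not_lt.mp hjc]

theorem powWindow_eq_zero_or_eq_zero [MonoidWithZero R] (A : R) {a b c e : ℕ} (h : b ≤ c)
    (j : ℕ) : powWindow A a b j = 0 ∨ powWindow A c e j = 0 := by
  unfold powWindow
  by_cases hj : j < b
  · exact .inr (if_neg (by omega))
  · exact .inl (if_neg (by omega))

theorem sum_univ_powWindow [MonoidWithZero R] {M : Type*} [AddCommMonoid M] (A : R)
    (g : R → M) (hg : g 0 = 0) {n a b : ℕ} (hbn : b ≤ n) :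
    ∑ j : Fin n, g (powWindow A a b j) = ∑ l ∈ range (b - a), g (A ^ l) := by
  have hg' : ∀ j, g (powWindow A a b j) = if j ∈ Ico a b then g (A ^ (b - 1 - j)) else 0 := by
    intro j
    simp only [powWindow, mem_Ico]
    split_ifs <;> simp only [hg]
  rw [Fin.sum_univ_eq_sum_range (fun j => g (powWindow A a b j)), sum_congr rfl fun j _ => hg' j,
    sum_ite_mem, inter_eq_right.mpr fun j hj => mem_range.mpr ((mem_Ico.mp hj).2.trans_le hbn),
    sum_Ico_eq_sum_range, ← sum_range_reflect]
  refine sum_congr rfl fun l hl => ?_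
  rw [mem_range] at hl
  congr 2
  omega

end PowWindow

namespace Matrix

variable {ι κ μ K R : Type*} [Fintype K]

theorem comp_mul_comp [Fintype κ] [NonUnitalNonAssocSemiring R]
    (X : Matrix ι κ (Matrix K K R)) (Y : Matrix κ μ (Matrix K K R)) :
    comp ι κ K K R X * comp κ μ K K R Y = comp ι μ K K R (X * Y) := by
  ext ⟨i, x⟩ ⟨k, y⟩
  simp [mul_apply, Fintype.sum_prod_type, sum_apply]

theorem IsLowerTriangular.det_comp [LinearOrder ι] [Fintype ι] [DecidableEq ι] [DecidableEq K]
    [CommRing R] {M : Matrix ι ι (Matrix K K R)} (h : M.IsLowerTriangular) :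
    (comp ι ι K K R M).det = ∏ i, (M i i).det := by
  rw [h.comp.det_fintype]
  refine Fintype.prod_equiv OrderDual.ofDual _ _ fun i => ?_
  let e : K ≃ {p : ι × K // OrderDual.toDual p.1 = i} :=
    { toFun := fun x => ⟨(OrderDual.ofDual i, x), rfl⟩, invFun := fun p => p.1.2,
      left_inv := fun x => rfl,
      right_inv := fun p => by obtain ⟨⟨j, x⟩, rfl⟩ := p; rfl }
  rw [← det_submatrix_equiv_self e]
  rfl

open Unitary in
theorem PosSemidef.one_le_det_one_add {n : Type*} [Fintype n] [DecidableEq n]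
    {B : Matrix n n ℝ} (hB : B.PosSemidef) : 1 ≤ (1 + B).det := by
  -- diagonalising `B` gives `det (1 + B) = ∏ i, (1 + λ i)` with eigenvalues `λ i ≥ 0`
  rw [hB.1.spectral_theorem, ← map_one (conjStarAlgAut ℝ _ hB.1.eigenvectorUnitary),
    ← map_add, conjStarAlgAut_apply, det_mul, det_mul, mul_right_comm, ← det_mul,
    mul_star_self_of_mem hB.1.eigenvectorUnitary.2, det_one, one_mul, ← diagonal_one,
    diagonal_add, det_diagonal]
  exact one_le_prod fun i _ => le_add_of_nonneg_right (hB.eigenvalues_nonneg i)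

theorem one_le_det_sum_transpose_pow_mul_pow {n : Type*} [Fintype n] [DecidableEq n]
    (A : Matrix n n ℝ) {m : ℕ} (hm : 0 < m) :
    1 ≤ (∑ l ∈ range m, (A ^ l)ᵀ * A ^ l).det := by
  rw [← Nat.succ_pred_eq_of_pos hm, sum_range_succ']
  simp only [pow_zero, transpose_one, mul_one, add_comm _ (1 : Matrix n n ℝ)]
  refine PosSemidef.one_le_det_one_add (posSemidef_sum _ fun l _ => ?_)
  simpa using posSemidef_conjTranspose_mul_self (A ^ (l + 1))

end Matrix

section WindowBlocks

variable {ι K R : Type*} [Fintype K] [DecidableEq K] [Semiring R] (A : Matrix K K R)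

def windowBlocks (N : ℕ) (lo hi : ι → ℕ) : Matrix (Fin N) ι (Matrix K K R) :=
  of fun j k => powWindow A (lo k) (hi k) j

theorem windowBlocks_gram [Fintype ι] [DecidableEq ι] {N : ℕ} {lo hi : ι → ℕ}
    (hN : ∀ k, hi k ≤ N) (hdisj : Pairwise fun k k' => hi k ≤ lo k' ∨ hi k' ≤ lo k) :
    (windowBlocks A N lo hi)ᵀ.map transpose * windowBlocks A N lo hi =
      diagonal fun k => ∑ l ∈ range (hi k - lo k), (A ^ l)ᵀ * A ^ l := by
  ext1 k k'
  simp only [mul_apply, map_apply, transpose_apply, windowBlocks, of_apply]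
  by_cases hkk : k = k'
  · subst hkk
    rw [diagonal_apply_eq]
    exact sum_univ_powWindow A (fun X => Xᵀ * X) (by simp) (hN k)
  · rw [diagonal_apply_ne _ hkk]
    refine sum_eq_zero fun j _ => ?_
    rcases hdisj hkk with h | h
    · rcases powWindow_eq_zero_or_eq_zero A (a := lo k) (e := hi k') h j with h0 | h0 <;>
        simp [h0]
    · rcases powWindow_eq_zero_or_eq_zero A (a := lo k') (e := hi k) h j with h0 | h0 <;>
        simp [h0]

end WindowBlocks

section NextOrZero

variable {t : ℕ}

def nextOrZero (idx : Fin t → ℕ) (k : Fin t) : ℕ :=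
  if h : k.1 + 1 < t then idx ⟨k.1 + 1, h⟩ else 0

theorem le_nextOrZero {idx : Fin t → ℕ} (hidx : Antitone idx) {k k' : Fin t} (hkk : k < k') :
    idx k' ≤ nextOrZero idx k := by
  have hk : k.1 + 1 < t := by omega
  rw [nextOrZero, dif_pos hk]
  exact hidx (Fin.mk_le_of_le_val hkk)

theorem nextOrZero_lt {idx : Fin t → ℕ} (hidx : StrictAnti idx) (hpos : ∀ k, 1 ≤ idx k)
    (k : Fin t) : nextOrZero idx k < idx k := by
  unfold nextOrZero
  split_ifs with hk
  · exact hidx (Fin.mk_lt_mk.mpr (Nat.lt_succ_self k.1))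
  · exact hpos k

theorem nextOrZero_castSucc {s : ℕ} (idx : Fin (s + 1) → ℕ) (k : Fin s) :
    nextOrZero idx k.castSucc = idx k.succ :=
  dif_pos (Nat.succ_lt_succ k.2)

theorem nextOrZero_last {s : ℕ} (idx : Fin (s + 1) → ℕ) : nextOrZero idx (Fin.last s) = 0 :=
  dif_neg (Nat.lt_irrefl _)

end NextOrZero

section ColumnReduction

variable {K R : Type*} [Fintype K] [DecidableEq K] [CommRing R] (A : Matrix K K R) {t : ℕ}
  (idx : Fin t → ℕ)

def columnReduction : Matrix (Fin t) (Fin t) (Matrix K K R) :=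
  of fun k' k => if k' = k then 1 else if k'.1 = k.1 + 1 then -A ^ (idx k - idx k') else 0

theorem columnReduction_isLowerTriangular : (columnReduction A idx).IsLowerTriangular := by
  intro k' k hlt
  have hlt : k'.1 < k.1 := hlt
  simp only [columnReduction, of_apply, if_neg (Fin.ne_of_lt hlt),
    if_neg (show k'.1 ≠ k.1 + 1 by omega)]

theorem det_comp_columnReduction : (comp _ _ _ _ R (columnReduction A idx)).det = 1 := by
  rw [(columnReduction_isLowerTriangular A idx).det_comp]
  simp [columnReduction]

theorem windowBlocks_mul_columnReduction (hidx : Antitone idx) (N : ℕ) :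
    windowBlocks A N 0 idx * columnReduction A idx = windowBlocks A N (nextOrZero idx) idx := by
  ext1 j k
  simp only [mul_apply, windowBlocks, columnReduction, of_apply, Pi.zero_apply, nextOrZero]
  by_cases hk : k.1 + 1 < t
  · set k₁ : Fin t := ⟨k.1 + 1, hk⟩
    have hne : k ≠ k₁ := Fin.ne_of_lt (Nat.lt_succ_self k.1)
    rw [Fintype.sum_eq_add k k₁ hne, dif_pos hk,
      ← powWindow_sub_mul_pow A (hidx (Nat.le_succ k.1))]
    · simp [hne.symm, k₁, sub_eq_add_neg]
    · rintro k' ⟨hk', hk'₁⟩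
      have : k'.1 ≠ k.1 + 1 := fun h => hk'₁ (Fin.ext h)
      simp [hk', this]
  · rw [Fintype.sum_eq_single k, dif_neg hk]
    · simp
    · intro k' hk'
      have : k'.1 ≠ k.1 + 1 := by omega
      simp [hk', this]

theorem det_transpose_mul_self_comp_windowBlocks (hidx : Antitone idx) {N : ℕ}
    (hN : ∀ k, idx k ≤ N) :
    ((comp _ _ _ _ R (windowBlocks A N 0 idx))ᵀ * comp _ _ _ _ R (windowBlocks A N 0 idx)).det =
      ∏ k, (∑ l ∈ range (idx k - nextOrZero idx k), (A ^ l)ᵀ * A ^ l).det := by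
  set P := comp _ _ _ _ R (windowBlocks A N 0 idx)
  set U := comp _ _ _ _ R (columnReduction A idx)
  have hPU : P * U = comp _ _ _ _ R (windowBlocks A N (nextOrZero idx) idx) := by
    rw [comp_mul_comp, windowBlocks_mul_columnReduction A idx hidx]
  have hdisj :
      Pairwise fun k k' => idx k ≤ nextOrZero idx k' ∨ idx k' ≤ nextOrZero idx k := by
    intro k k' hkk
    rcases hkk.lt_or_gt with h | h
    · exact .inr (le_nextOrZero hidx h)
    · exact .inl (le_nextOrZero hidx h)
  calc (Pᵀ * P).det = ((P * U)ᵀ * (P * U)).det := by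
        rw [transpose_mul, show Uᵀ * Pᵀ * (P * U) = Uᵀ * (Pᵀ * P) * U by
            simp only [Matrix.mul_assoc],
          det_mul, det_mul, det_transpose, det_comp_columnReduction, one_mul, mul_one]
    _ = _ := by
        rw [hPU, transpose_comp, comp_mul_comp, windowBlocks_gram A hN hdisj,
          IsLowerTriangular.det_comp (blockTriangular_diagonal _)]
        simp

end ColumnReduction

/-- For `A ∈ ℝ^{d×d}` and indices `i_1 > i_2 > … > i_t ≥ 1` (`t ≥ 2`), the
block matrix `P = [P_{i_1} … P_{i_t}]` (where `P_{i_k}` stacks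
`A^{i_k−1},…,A,I_d` followed by zero blocks) satisfies
`det(PᵀP) = (∏_{k=1}^{t−1} det(∑_{l=0}^{i_k−i_{k+1}−1} (A^l)ᵀ A^l))
  · det(∑_{l=0}^{i_t−1} (A^l)ᵀ A^l)`, and in particular `det(PᵀP) ≥ 1`. -/
theorem det_PtP_formula {d t : ℕ} (ht : 2 ≤ t)
    (A : Matrix (Fin d) (Fin d) ℝ)
    (idx : Fin t → ℕ) (hanti : StrictAnti idx) (hpos : ∀ k, 1 ≤ idx k)
    (n₁ : ℕ) (hn₁ : n₁ = idx ⟨0, by omega⟩)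
    (P : Matrix (Fin n₁ × Fin d) (Fin t × Fin d) ℝ)
    (hP : ∀ (j : Fin n₁) (x : Fin d) (k : Fin t) (y : Fin d),
      P (j, x) (k, y) =
        if j.1 + 1 ≤ idx k then (A ^ (idx k - 1 - j.1)) x y else 0) :
    (Pᵀ * P).det =
      (∏ k : Fin (t - 1),
        (∑ l ∈ Finset.range
            (idx ⟨k.1, by have := k.2; omega⟩ - idx ⟨k.1 + 1, by have := k.2; omega⟩),
          (A ^ l)ᵀ * A ^ l).det)
        * (∑ l ∈ Finset.range (idx ⟨t - 1, by omega⟩), (A ^ l)ᵀ * A ^ l).det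
    ∧ 1 ≤ (Pᵀ * P).det := by
  have hP_eq : P = comp _ _ _ _ ℝ (windowBlocks A n₁ 0 idx) := by
    ext ⟨j, x⟩ ⟨k, y⟩
    simp only [hP, comp_apply, windowBlocks, powWindow, of_apply, Pi.zero_apply, zero_le, true_and,
      Nat.succ_le_iff]
    split_ifs <;> rfl
  have hdet := det_transpose_mul_self_comp_windowBlocks A idx hanti.antitone
    fun k => hn₁ ▸ hanti.antitone (Fin.mk_le_of_le_val (Nat.zero_le k))
  rw [← hP_eq] at hdet
  refine ⟨?_, ?_⟩
  · obtain ⟨s, rfl⟩ : ∃ s, t = s + 1 := ⟨t - 1, by omega⟩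
    rw [hdet, Fin.prod_univ_castSucc]
    congr 2
    · funext k
      rw [nextOrZero_castSucc]
      rfl
    · rw [nextOrZero_last, Nat.sub_zero]
      rfl
  · rw [hdet]
    exact one_le_prod fun k _ =>
      one_le_det_sum_transpose_pow_mul_pow A (Nat.sub_pos_of_lt (nextOrZero_lt hanti hpos k))
end

section
/- Let A be a d×d real matrix with ‖A‖₂ < 1 and let i_1 > i_2 > ... > i_t ≥ 1 (t ≥ 2). With P = [P_{i_1} ... P_{i_t}] defined by stacking powers of A as in the CVAR analysis (the j-th d×d block of P_{i_k} equals A^{i_k − j} for j ≤ i_k and 0 otherwise), the largest eigenvalue of P^T P satisfies λ_1(P^T P) ≤ 1/(1 − ‖A‖₂)². -/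
/-!
Every eigenvalue of the symmetric matrix `Pᵀ P` is at most `‖Pᵀ P‖ = ‖P‖²` (spectral norm).
The `(j, k)` block of `P` is `A ^ (i_k - 1 - j)` or `0`, of norm at most `a ^ (i_k - 1 - j)`
with `a = ‖A‖`. The exponents are distinct along each block column, and also along each block
row because the `i_k` are distinct; hence all row and column sums of this scalar majorant are
bounded by `∑ aⁿ = 1 / (1 - a)`, and the Schur test gives `‖P‖ ≤ 1 / (1 - a)`.
-/

open Matrix Finset

/-- The spectral norm (operator norm induced by the Euclidean norm) of a real
square matrix. -/
noncomputable def specNorm {n : Type*} [Fintype n] [DecidableEq n]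
    (M : Matrix n n ℝ) : ℝ :=
  ‖Matrix.toEuclideanCLM (𝕜 := ℝ) M‖

open scoped Matrix.Norms.L2Operator

/-- The **Schur test** for a nonnegative kernel `c`. -/
theorem sum_sq_sum_mul_le_of_sum_le {ι κ : Type*} [Fintype ι] [Fintype κ] {c : ι → κ → ℝ}
    (hc : ∀ i k, 0 ≤ c i k) {R C : ℝ} (hR : 0 ≤ R) (hrow : ∀ i, ∑ k, c i k ≤ R)
    (hcol : ∀ k, ∑ i, c i k ≤ C) (w : κ → ℝ) :
    ∑ i, (∑ k, c i k * w k) ^ 2 ≤ R * C * ∑ k, w k ^ 2 := by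
  have hc_sq (i) : 0 ≤ ∑ k, c i k * w k ^ 2 :=
    sum_nonneg fun k _ => mul_nonneg (hc i k) (sq_nonneg _)
  have hrow_sq (i) : (∑ k, c i k * w k) ^ 2 ≤ R * ∑ k, c i k * w k ^ 2 :=
    calc (∑ k, c i k * w k) ^ 2 ≤ (∑ k, c i k) * ∑ k, c i k * w k ^ 2 :=
          sum_sq_le_sum_mul_sum_of_sq_le_mul _ (fun k _ => hc i k)
            (fun k _ => mul_nonneg (hc i k) (sq_nonneg _)) (fun k _ => le_of_eq (by ring))
      _ ≤ R * ∑ k, c i k * w k ^ 2 := mul_le_mul_of_nonneg_right (hrow i) (hc_sq i)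
  calc ∑ i, (∑ k, c i k * w k) ^ 2 ≤ ∑ i, R * ∑ k, c i k * w k ^ 2 :=
        sum_le_sum fun i _ => hrow_sq i
    _ = R * ∑ k, (∑ i, c i k) * w k ^ 2 := by
        simp_rw [← mul_sum, sum_mul]
        rw [sum_comm]
    _ ≤ R * ∑ k, C * w k ^ 2 := by gcongr with k; exact hcol k
    _ = R * C * ∑ k, w k ^ 2 := by rw [← mul_sum, mul_assoc]

theorem sum_pow_le_inv_one_sub_of_injOn {ι : Type*} {a : ℝ} (ha₀ : 0 ≤ a) (ha₁ : a < 1)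
    {s : Finset ι} {f : ι → ℕ} (hf : Set.InjOn f s) : ∑ i ∈ s, a ^ f i ≤ (1 - a)⁻¹ := by
  rw [← sum_image hf, ← tsum_geometric_of_lt_one ha₀ ha₁]
  exact (summable_geometric_of_lt_one ha₀ ha₁).sum_le_tsum _ fun _ _ => pow_nonneg ha₀ _

/-- `truncPow A i j` is the `j`-th block (counted from `0`) of the paper's `P_i`. -/
def truncPow {M : Type*} [MonoidWithZero M] (x : M) (N j : ℕ) : M :=
  if j + 1 ≤ N then x ^ (N - 1 - j) else 0

theorem truncPow_nonneg {a : ℝ} (ha : 0 ≤ a) (N j : ℕ) : 0 ≤ truncPow a N j := by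
  unfold truncPow
  split_ifs <;> positivity

theorem sum_truncPow_le_of_injective {κ : Type*} [Fintype κ] {a : ℝ} (ha₀ : 0 ≤ a)
    (ha₁ : a < 1) {N : κ → ℕ} (hN : Function.Injective N) (j : ℕ) :
    ∑ k, truncPow a (N k) j ≤ (1 - a)⁻¹ := by
  simp only [truncPow, ← sum_filter]
  refine sum_pow_le_inv_one_sub_of_injOn ha₀ ha₁ fun k hk k' hk' h => hN ?_
  simp only [coe_filter, mem_univ, true_and, Set.mem_ofPred_eq] at hk hk' h
  omega

theorem sum_truncPow_fin_le {a : ℝ} (ha₀ : 0 ≤ a) (ha₁ : a < 1) (m N : ℕ) :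
    ∑ j : Fin m, truncPow a N j ≤ (1 - a)⁻¹ := by
  simp only [truncPow, ← sum_filter]
  refine sum_pow_le_inv_one_sub_of_injOn ha₀ ha₁ fun j hj j' hj' h => Fin.ext ?_
  simp only [coe_filter, mem_univ, true_and, Set.mem_ofPred_eq] at hj hj' h
  omega

theorem EuclideanSpace.norm_toLp_prod_sq {ι m : Type*} [Fintype ι] [Fintype m]
    (x : ι × m → ℝ) :
    ‖WithLp.toLp 2 x‖ ^ 2 = ∑ i, ‖WithLp.toLp 2 fun y => x (i, y)‖ ^ 2 := by
  simp only [EuclideanSpace.real_norm_sq_eq, Fintype.sum_prod_type]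

namespace Matrix

variable {ι κ m n : Type*}

theorem mulVec_prod_eq_sum_submatrix [Fintype κ] [Fintype n] (P : Matrix (ι × m) (κ × n) ℝ)
    (x : κ × n → ℝ) (i : ι) :
    (fun y => (P *ᵥ x) (i, y)) =
      ∑ k, P.submatrix (Prod.mk i) (Prod.mk k) *ᵥ fun z => x (k, z) := by
  ext y
  simp [mulVec, dotProduct, Fintype.sum_prod_type]

theorem norm_toLp_mulVec_le [Fintype m] [Fintype n] [DecidableEq n] (M : Matrix m n ℝ)
    (x : n → ℝ) : ‖WithLp.toLp 2 (M *ᵥ x)‖ ≤ ‖M‖ * ‖WithLp.toLp 2 x‖ :=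
  M.l2_opNorm_mulVec (WithLp.toLp 2 x)

theorem l2_opNorm_le_of_norm_toLp_mulVec_le [Fintype m] [Fintype n] [DecidableEq n]
    {M : Matrix m n ℝ} {K : ℝ} (hK : 0 ≤ K)
    (h : ∀ x, ‖WithLp.toLp 2 (M *ᵥ x)‖ ≤ K * ‖WithLp.toLp 2 x‖) : ‖M‖ ≤ K := by
  rw [l2_opNorm_def]
  exact ContinuousLinearMap.opNorm_le_bound _ hK fun x => h x

theorem l2_opNorm_le_of_norm_submatrix_le [Fintype ι] [Fintype κ] [DecidableEq κ] [Fintype m]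
    [Fintype n] [DecidableEq n] (P : Matrix (ι × m) (κ × n) ℝ) {c : ι → κ → ℝ}
    (hc : ∀ i k, 0 ≤ c i k) {R C : ℝ} (hR : 0 ≤ R) (hrow : ∀ i, ∑ k, c i k ≤ R)
    (hcol : ∀ k, ∑ i, c i k ≤ C)
    (hblock : ∀ i k, ‖P.submatrix (Prod.mk i) (Prod.mk k)‖ ≤ c i k) :
    ‖P‖ ≤ √(R * C) := by
  refine l2_opNorm_le_of_norm_toLp_mulVec_le (Real.sqrt_nonneg _) fun x => ?_
  set w : κ → ℝ := fun k => ‖WithLp.toLp 2 fun z => x (k, z)‖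
  have hrow_norm (i) : ‖WithLp.toLp 2 fun y => (P *ᵥ x) (i, y)‖ ≤ ∑ k, c i k * w k := by
    rw [mulVec_prod_eq_sum_submatrix, WithLp.toLp_sum]
    refine (norm_sum_le _ _).trans (sum_le_sum fun k _ => ?_)
    exact (norm_toLp_mulVec_le _ _).trans (mul_le_mul_of_nonneg_right (hblock i k) (norm_nonneg _))
  have hsq : ‖WithLp.toLp 2 (P *ᵥ x)‖ ^ 2 ≤ R * C * ‖WithLp.toLp 2 x‖ ^ 2 := by
    rw [EuclideanSpace.norm_toLp_prod_sq, EuclideanSpace.norm_toLp_prod_sq x]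
    refine le_trans (sum_le_sum fun i _ => ?_) (sum_sq_sum_mul_le_of_sum_le hc hR hrow hcol w)
    exact pow_le_pow_left₀ (norm_nonneg _) (hrow_norm i) 2
  calc ‖WithLp.toLp 2 (P *ᵥ x)‖ = √(‖WithLp.toLp 2 (P *ᵥ x)‖ ^ 2) :=
        (Real.sqrt_sq (norm_nonneg _)).symm
    _ ≤ √(R * C * ‖WithLp.toLp 2 x‖ ^ 2) := Real.sqrt_le_sqrt hsq
    _ = √(R * C) * ‖WithLp.toLp 2 x‖ := by
        rw [Real.sqrt_mul' _ (sq_nonneg _), Real.sqrt_sq (norm_nonneg _)]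

variable [Fintype n] [DecidableEq n]

-- `Matrix n n ℝ` is a `NormOneClass` only when `n` is nonempty.
theorem l2_opNorm_pow_le (A : Matrix n n ℝ) (e : ℕ) : ‖A ^ e‖ ≤ ‖A‖ ^ e := by
  cases isEmpty_or_nonempty n
  · simp [Subsingleton.elim (A ^ e) 0]
  · exact norm_pow_le A e

theorem l2_opNorm_truncPow_le (A : Matrix n n ℝ) (N j : ℕ) :
    ‖truncPow A N j‖ ≤ truncPow ‖A‖ N j := by
  unfold truncPow
  split_ifs
  · exact l2_opNorm_pow_le A _
  · simp

theorem IsHermitian.eigenvalues_le_l2_opNorm {A : Matrix n n ℝ} (hA : A.IsHermitian) (i : n) :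
    hA.eigenvalues i ≤ ‖A‖ :=
  have : Nonempty n := ⟨i⟩
  (le_abs_self _).trans (spectrum.norm_le_norm_of_mem (hA.eigenvalues_mem_spectrum_real i))

end Matrix

theorem specNorm_eq_l2_opNorm {n : Type*} [Fintype n] [DecidableEq n] (M : Matrix n n ℝ) :
    specNorm M = ‖M‖ :=
  rfl

/-- For `‖A‖₂ < 1` and `i_1 > … > i_t ≥ 1` (`t ≥ 2`), with
`P = [P_{i_1} … P_{i_t}]` the horizontal concatenation of vertical stacks of
powers of `A`, the largest eigenvalue of `PᵀP` is at most `1/(1 − ‖A‖₂)²`. -/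
theorem eigenvalue_PtP_le {d t : ℕ}
    (A : Matrix (Fin d) (Fin d) ℝ) (hA : specNorm A < 1)
    (idx : Fin t → ℕ) (hanti : StrictAnti idx)
    (n₁ : ℕ)
    (P : Matrix (Fin n₁ × Fin d) (Fin t × Fin d) ℝ)
    (hP : ∀ (j : Fin n₁) (x : Fin d) (k : Fin t) (y : Fin d),
      P (j, x) (k, y) =
        if j.1 + 1 ≤ idx k then (A ^ (idx k - 1 - j.1)) x y else 0)
    (hH : (Pᵀ * P).IsHermitian) :
    ∀ i, hH.eigenvalues i ≤ 1 / (1 - specNorm A) ^ 2 := by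
  intro i
  rw [specNorm_eq_l2_opNorm] at hA ⊢
  have ha₀ : 0 ≤ ‖A‖ := norm_nonneg A
  have hR : 0 ≤ (1 - ‖A‖)⁻¹ := inv_nonneg.2 (sub_nonneg.2 hA.le)
  have hblocks (j k) : P.submatrix (Prod.mk j) (Prod.mk k) = truncPow A (idx k) j := by
    ext x y
    simp only [submatrix_apply, hP, truncPow]
    split_ifs <;> rfl
  have hP_le : ‖P‖ ≤ (1 - ‖A‖)⁻¹ := by
    have := P.l2_opNorm_le_of_norm_submatrix_le (fun j k => truncPow_nonneg ha₀ (idx k) j) hR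
      (fun j => sum_truncPow_le_of_injective ha₀ hA hanti.injective j)
      (fun k => sum_truncPow_fin_le ha₀ hA n₁ (idx k))
      (fun j k => hblocks j k ▸ l2_opNorm_truncPow_le A (idx k) j)
    rwa [Real.sqrt_mul_self hR] at this
  calc hH.eigenvalues i ≤ ‖Pᵀ * P‖ := hH.eigenvalues_le_l2_opNorm i
    _ = ‖P‖ ^ 2 := by
      rw [← conjTranspose_eq_transpose_of_trivial, l2_opNorm_conjTranspose_mul_self, sq]
    _ ≤ ((1 - ‖A‖)⁻¹) ^ 2 := by gcongr
    _ = 1 / (1 - ‖A‖) ^ 2 := by rw [inv_pow, one_div]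
end

section
/- Let A be a d×d real matrix with ‖A‖₂ < 1. For all natural numbers k with i_k ≥ 1, the diagonal Gram block P_{i_k}^T P_{i_k} = ∑_{j=0}^{i_k − 1} (A^j)^T A^j satisfies: its spectrum is contained in the interval [1 − δ(A), 1 + δ(A)] where δ(A) = ‖A‖₂²/(1 − ‖A‖₂²). -/
/-!
At a unit eigenvector `v` of the Gram block `G`, the eigenvalue is `⟪v, G v⟫ = ∑_{j<m} ‖Aʲ v‖²`.
The `j = 0` term alone gives the lower bound `1`, and `‖Aʲ v‖ ≤ ‖A‖ʲ` bounds the sum by the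
geometric series `1 / (1 - ‖A‖²) = 1 + δ(A)`.
-/

open Matrix Finset

open scoped RealInnerProductSpace

namespace ContinuousLinearMap

variable {𝕜 E : Type*} [NontriviallyNormedField 𝕜] [SeminormedAddCommGroup E] [NormedSpace 𝕜 E]

theorem norm_pow_apply_le (T : E →L[𝕜] E) (j : ℕ) (x : E) : ‖(T ^ j) x‖ ≤ ‖T‖ ^ j * ‖x‖ := by
  induction j with
  | zero => simp
  | succ j ih =>
    calc ‖(T ^ (j + 1)) x‖ = ‖T ((T ^ j) x)‖ := by rw [pow_succ']; rfl
      _ ≤ ‖T‖ * (‖T‖ ^ j * ‖x‖) := T.le_opNorm_of_le ih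
      _ = ‖T‖ ^ (j + 1) * ‖x‖ := by ring

theorem sq_norm_le_sum_range_sq_norm_pow_apply (T : E →L[𝕜] E) {m : ℕ} (hm : 1 ≤ m) (x : E) :
    ‖x‖ ^ 2 ≤ ∑ j ∈ range m, ‖(T ^ j) x‖ ^ 2 := by
  simpa using single_le_sum (f := fun j => ‖(T ^ j) x‖ ^ 2) (fun j _ => sq_nonneg _)
    (mem_range.mpr hm)

theorem sum_range_sq_norm_pow_apply_le (T : E →L[𝕜] E) (hT : ‖T‖ < 1) (m : ℕ) (x : E) :
    ∑ j ∈ range m, ‖(T ^ j) x‖ ^ 2 ≤ ‖x‖ ^ 2 / (1 - ‖T‖ ^ 2) := by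
  have hT2 : ‖T‖ ^ 2 < 1 := pow_lt_one₀ (norm_nonneg T) hT two_ne_zero
  calc ∑ j ∈ range m, ‖(T ^ j) x‖ ^ 2 ≤ ∑ j ∈ range m, (‖T‖ ^ 2) ^ j * ‖x‖ ^ 2 := by
        gcongr with j
        calc ‖(T ^ j) x‖ ^ 2 ≤ (‖T‖ ^ j * ‖x‖) ^ 2 := by gcongr; exact T.norm_pow_apply_le j x
          _ = (‖T‖ ^ 2) ^ j * ‖x‖ ^ 2 := by ring
    _ = (∑ j ∈ Ico 0 m, (‖T‖ ^ 2) ^ j) * ‖x‖ ^ 2 := by rw [sum_mul, range_eq_Ico]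
    _ ≤ (‖T‖ ^ 2) ^ 0 / (1 - ‖T‖ ^ 2) * ‖x‖ ^ 2 := by
        gcongr; exact geom_sum_Ico_le_of_lt_one (sq_nonneg _) hT2
    _ = ‖x‖ ^ 2 / (1 - ‖T‖ ^ 2) := by ring

end ContinuousLinearMap

namespace Matrix

variable {n : Type*} [Fintype n] [DecidableEq n]

theorem IsHermitian.eigenvalues_eq_inner {M : Matrix n n ℝ} (hM : M.IsHermitian) (i : n) :
    hM.eigenvalues i =
      ⟪hM.eigenvectorBasis i, toEuclideanCLM (𝕜 := ℝ) M (hM.eigenvectorBasis i)⟫ := by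
  simp [inner_toEuclideanCLM, hM.eigenvalues_eq]

theorem inner_toEuclideanCLM_transpose_mul_self (B : Matrix n n ℝ) (x : EuclideanSpace ℝ n) :
    ⟪x, toEuclideanCLM (𝕜 := ℝ) (Bᵀ * B) x⟫ = ‖toEuclideanCLM (𝕜 := ℝ) B x‖ ^ 2 := by
  rw [← conjTranspose_eq_transpose_of_trivial, ← star_eq_conjTranspose, map_mul, map_star,
    ContinuousLinearMap.star_eq_adjoint, mul_apply_eq_comp,
    ContinuousLinearMap.adjoint_inner_right, real_inner_self_eq_norm_sq]

theorem inner_toEuclideanCLM_gram_sum (A : Matrix n n ℝ) (m : ℕ) (x : EuclideanSpace ℝ n) :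
    ⟪x, toEuclideanCLM (𝕜 := ℝ) (∑ j ∈ range m, (A ^ j)ᵀ * A ^ j) x⟫ =
      ∑ j ∈ range m, ‖(toEuclideanCLM (𝕜 := ℝ) A ^ j) x‖ ^ 2 := by
  simp only [map_sum, _root_.sum_apply, inner_sum,
    inner_toEuclideanCLM_transpose_mul_self, map_pow]

end Matrix

/-- For `‖A‖₂ < 1` and `m ≥ 1`, the spectrum of the Gram block
`∑_{j=0}^{m−1} (A^j)ᵀ A^j` is contained in `[1 − δ(A), 1 + δ(A)]` where
`δ(A) = ‖A‖₂²/(1 − ‖A‖₂²)`. -/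
theorem spectrum_gram_block {d : ℕ}
    (A : Matrix (Fin d) (Fin d) ℝ) (hA : specNorm A < 1)
    (m : ℕ) (hm : 1 ≤ m)
    (hG : (∑ j ∈ Finset.range m, (A ^ j)ᵀ * A ^ j).IsHermitian) :
    ∀ i, 1 - specNorm A ^ 2 / (1 - specNorm A ^ 2) ≤ hG.eigenvalues i
        ∧ hG.eigenvalues i ≤ 1 + specNorm A ^ 2 / (1 - specNorm A ^ 2) := by
  intro i
  set T := toEuclideanCLM (𝕜 := ℝ) A
  set v := hG.eigenvectorBasis i
  have hv : ‖v‖ = 1 := hG.eigenvectorBasis.orthonormal.1 i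
  have hgap : 0 < 1 - specNorm A ^ 2 := sub_pos.2 (pow_lt_one₀ (norm_nonneg T) hA two_ne_zero)
  have hδ : 0 ≤ specNorm A ^ 2 / (1 - specNorm A ^ 2) := by positivity
  rw [hG.eigenvalues_eq_inner, inner_toEuclideanCLM_gram_sum]
  constructor
  · have hlower := T.sq_norm_le_sum_range_sq_norm_pow_apply hm v
    rw [hv] at hlower
    linarith
  · calc _ ≤ ‖v‖ ^ 2 / (1 - specNorm A ^ 2) := T.sum_range_sq_norm_pow_apply_le hA m v
      _ = 1 + specNorm A ^ 2 / (1 - specNorm A ^ 2) := by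
          rw [hv]; field_simp; ring
end

section
/- Let P ∈ ℝ^{q'×q} have rank q (with q' ≥ q) and let U ∈ ℝ^{q×p} have orthonormal columns (p ≤ q). Then det((PU)^T (PU)) ≥ det(P^T P) / ∏_{k=1}^{q−p} λ_k(P^T P), where λ_1 ≥ λ_2 ≥ ... are the eigenvalues of P^T P in decreasing order; equivalently det((PU)^T(PU)) ≥ ∏_{k=q−p+1}^{q} λ_k(P^T P). -/
/-!
Diagonalize `PᵀP = Q D Qᵀ` and put `V = QᵀU`, so that `VᵀV = 1` and
`(PU)ᵀ(PU) = VᵀDV`. By Cauchy–Binet, `det (VᵀDV) = ∑_S (∏_{i ∈ S} dᵢ) det (V_S)²` and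
`1 = det (VᵀV) = ∑_S det (V_S)²`, the sums running over the `p`-element sets `S` of rows of `V`.
Every weight `∏_{i ∈ S} dᵢ` is at least the product of the `p` smallest eigenvalues, which gives
the second bound; the first follows because `det (PᵀP)` is the product of all eigenvalues.
-/

open Matrix Finset

theorem Finset.prod_le_prod_of_card_eq_of_forall_sdiff_le {ι R : Type*} [DecidableEq ι]
    [CommSemiring R] [LinearOrder R] [IsOrderedRing R] {s t : Finset ι} {f : ι → R} (hf : 0 ≤ f)
    (hcard : #t = #s) (hle : ∀ i ∈ t \ s, ∀ j ∈ s \ t, f i ≤ f j) :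
    ∏ i ∈ t, f i ≤ ∏ i ∈ s, f i := by
  rw [← prod_inter_mul_prod_sdiff t s, ← prod_inter_mul_prod_sdiff s t, inter_comm]
  refine mul_le_mul_of_nonneg_left ?_ (prod_nonneg fun i _ => hf i)
  obtain hts | ⟨a, ha, hmax⟩ := (t \ s).eq_empty_or_nonempty.imp_right fun h =>
    exists_max_image (t \ s) f h
  · have hst : s \ t = ∅ := card_eq_zero.mp (by rw [card_sdiff_comm hcard.symm, hts, card_empty])
    simp [hts, hst]
  calc ∏ i ∈ t \ s, f i ≤ ∏ _i ∈ t \ s, f a := prod_le_prod (fun i _ => hf i) hmax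
    _ = ∏ _j ∈ s \ t, f a := by rw [prod_const, prod_const, card_sdiff_comm hcard]
    _ ≤ ∏ j ∈ s \ t, f j := prod_le_prod (fun _ _ => hf a) (hle a ha)

theorem Fin.card_filter_sub_le_val {q p : ℕ} (hp : p ≤ q) : #{k : Fin q | q - p ≤ k.1} = p := by
  have hlt := Fin.card_filter_val_lt (n := q) (m := q - p)
  have hsum := card_filter_add_card_filter_not (s := univ) (fun k : Fin q => k.1 < q - p)
  simp only [not_lt, card_univ, Fintype.card_fin] at hsum
  omega

theorem Fin.prod_filter_sub_le_val_le_prod_comp_of_injective {R : Type*} [CommSemiring R]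
    [LinearOrder R] [IsOrderedRing R] {q p : ℕ} {μ : Fin q → R} (hμ : Antitone μ) (h0 : 0 ≤ μ)
    {f : Fin p → Fin q} (hf : Function.Injective f) :
    ∏ k ∈ univ.filter (fun k : Fin q => q - p ≤ k.1), μ k ≤ ∏ i, μ (f i) := by
  have hpq : p ≤ q := by simpa using Fintype.card_le_of_injective f hf
  have hcard : #(univ.image f) = p := by simp [card_image_of_injective _ hf]
  rw [← prod_image fun i _ j _ hij => hf hij]
  refine prod_le_prod_of_card_eq_of_forall_sdiff_le h0 ?_ fun i hi j hj => ?_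
  · rw [hcard, Fin.card_filter_sub_le_val hpq]
  · simp only [mem_sdiff, mem_filter, mem_univ, true_and] at hi hj
    exact hμ (Fin.le_def.mpr (by omega))

namespace Matrix

section CauchyBinet

variable {m n R : Type*} [Fintype m] [Fintype n] [DecidableEq n] [CommRing R]

theorem det_mul_eq_sum_prod_mul_det_submatrix (A : Matrix n m R) (B : Matrix m n R) :
    det (A * B) = ∑ g : n → m, (∏ i, B (g i) i) * det (A.submatrix id g) := by
  simp only [det_apply', mul_apply, prod_univ_sum, mul_sum, Fintype.piFinset_univ,
    submatrix_apply, id, prod_mul_distrib]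
  rw [sum_comm]
  exact sum_congr rfl fun g _ => sum_congr rfl fun σ _ => by ring

/-- Cauchy–Binet, summed over all maps `f : n → m` instead of over subsets of `m`: non-injective
maps contribute `0`, and every subset of size `card n` is the range of `(card n)!` injective maps. -/
theorem factorial_card_nsmul_det_mul (A : Matrix n m R) (B : Matrix m n R) :
    (Fintype.card n).factorial • det (A * B) =
      ∑ f : n → m, det (A.submatrix id f) * det (B.submatrix f id) := by
  calc (Fintype.card n).factorial • det (A * B)
      = ∑ τ : Equiv.Perm n, ∑ g : n → m, (∏ i, B (g i) i) * det (A.submatrix id g) := by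
        rw [← Fintype.card_perm, ← card_univ, ← sum_const,
          det_mul_eq_sum_prod_mul_det_submatrix]
    _ = ∑ τ : Equiv.Perm n, ∑ f : n → m,
          (∏ i, B (f (τ i)) i) * det ((A.submatrix id f).submatrix id τ) := by
        refine sum_congr rfl fun τ _ => ?_
        exact (Equiv.sum_comp (τ.symm.arrowCongr (Equiv.refl m)) _).symm
    _ = ∑ f : n → m, det (A.submatrix id f) *
          ∑ τ : Equiv.Perm n, Equiv.Perm.sign τ • ∏ i, B (f (τ i)) i := by
        rw [sum_comm]
        refine sum_congr rfl fun f _ => ?_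
        rw [mul_sum]
        refine sum_congr rfl fun τ _ => ?_
        rw [det_permute', Units.smul_def]
        ring
    _ = ∑ f : n → m, det (A.submatrix id f) * det (B.submatrix f id) := by
        simp [det_apply]

theorem factorial_card_nsmul_det_transpose_mul_diagonal_mul [DecidableEq m] (M : Matrix m n R)
    (d : m → R) :
    (Fintype.card n).factorial • det (Mᵀ * diagonal d * M) =
      ∑ f : n → m, (∏ i, d (f i)) * det (M.submatrix f id) ^ 2 := by
  rw [factorial_card_nsmul_det_mul]
  refine sum_congr rfl fun f _ => ?_
  have hsub : (Mᵀ * diagonal d).submatrix id f = (M.submatrix f id)ᵀ * diagonal (d ∘ f) := by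
    ext i k
    simp [mul_diagonal]
  rw [hsub, det_mul, det_transpose, det_diagonal]
  simp only [Function.comp_apply]
  ring

end CauchyBinet

theorem det_submatrix_eq_zero_of_not_injective {m n R : Type*} [Fintype n] [DecidableEq n]
    [CommRing R] {f : n → m} (hf : ¬Function.Injective f) (M : Matrix m n R) :
    det (M.submatrix f id) = 0 := by
  obtain ⟨i, j, hij, hne⟩ := Function.not_injective_iff.mp hf
  exact det_zero_of_row_eq hne (funext fun k => by simp [hij])

theorem mul_det_transpose_mul_le_det_transpose_mul_diagonal_mul {m n R : Type*} [Fintype m]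
    [DecidableEq m] [Fintype n] [DecidableEq n] [CommRing R] [LinearOrder R]
    [IsStrictOrderedRing R] (M : Matrix m n R) (d : m → R) {c : R}
    (hc : ∀ f : n → m, Function.Injective f → c ≤ ∏ i, d (f i)) :
    c * det (Mᵀ * M) ≤ det (Mᵀ * diagonal d * M) := by
  have hgram := factorial_card_nsmul_det_transpose_mul_diagonal_mul M fun _ => 1
  simp only [diagonal_one, Matrix.mul_one, prod_const_one, one_mul] at hgram
  refine le_of_nsmul_le_nsmul_right (Fintype.card n).factorial_ne_zero ?_
  rw [← mul_smul_comm, hgram, factorial_card_nsmul_det_transpose_mul_diagonal_mul, mul_sum]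
  refine sum_le_sum fun f _ => ?_
  by_cases hf : Function.Injective f
  · exact mul_le_mul_of_nonneg_right (hc f hf) (sq_nonneg _)
  · simp [det_submatrix_eq_zero_of_not_injective hf]

theorem IsHermitian.exists_transpose_mul_mul_eq {n p : Type*} [Fintype n] [DecidableEq n]
    [Fintype p] {A : Matrix n n ℝ} (hA : A.IsHermitian) (U : Matrix n p ℝ) :
    ∃ V : Matrix n p ℝ, Vᵀ * V = Uᵀ * U ∧ Uᵀ * A * U = Vᵀ * diagonal hA.eigenvalues * V := by
  set Q : Matrix n n ℝ := (hA.eigenvectorUnitary : Matrix n n ℝ)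
  have hQ : Q * Qᵀ = 1 := Unitary.coe_mul_star_self hA.eigenvectorUnitary
  have hA' : A = Q * diagonal hA.eigenvalues * Qᵀ := by
    simpa [Unitary.conjStarAlgAut_apply, RCLike.ofReal_real_eq_id, star_eq_conjTranspose]
      using hA.spectral_theorem
  refine ⟨Qᵀ * U, ?_, ?_⟩
  · rw [transpose_mul, transpose_transpose, Matrix.mul_assoc, ← Matrix.mul_assoc Q, hQ,
      Matrix.one_mul]
  · conv_lhs => rw [hA']
    simp only [transpose_mul, transpose_transpose, Matrix.mul_assoc]

end Matrix

theorem det_PU_ge_general {q q' p : ℕ}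
    (P : Matrix (Fin q') (Fin q) ℝ)
    (U : Matrix (Fin q) (Fin p) ℝ) (hU : Uᵀ * U = 1)
    (hH : (Pᵀ * P).IsHermitian)
    (μ : Fin q → ℝ) (hmono : Antitone μ)
    (hperm : ∃ σ : Equiv.Perm (Fin q), ∀ i, μ i = hH.eigenvalues (σ i)) :
    ((P * U)ᵀ * (P * U)).det
        ≥ (Pᵀ * P).det / ∏ k ∈ Finset.univ.filter (fun k : Fin q => k.1 < q - p), μ k
    ∧ ((P * U)ᵀ * (P * U)).det
        ≥ ∏ k ∈ Finset.univ.filter (fun k : Fin q => q - p ≤ k.1), μ k := by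
  obtain ⟨σ, hσ⟩ := hperm
  set low := ∏ k ∈ univ.filter (fun k : Fin q => k.1 < q - p), μ k
  set high := ∏ k ∈ univ.filter (fun k : Fin q => q - p ≤ k.1), μ k
  have hPSD := posSemidef_conjTranspose_mul_self P
  rw [conjTranspose_eq_transpose_of_trivial] at hPSD
  have hμ0 : 0 ≤ μ := fun i => (hσ i).symm ▸ hPSD.eigenvalues_nonneg (σ i)
  have hhigh : high ≤ ((P * U)ᵀ * (P * U)).det := by
    obtain ⟨V, hV, hUPU⟩ := hH.exists_transpose_mul_mul_eq U
    have hgram : (P * U)ᵀ * (P * U) = Uᵀ * (Pᵀ * P) * U := by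
      simp only [transpose_mul, Matrix.mul_assoc]
    rw [hgram, hUPU]
    have hweights : ∀ f : Fin p → Fin q, Function.Injective f →
        high ≤ ∏ i, hH.eigenvalues (f i) := fun f hf =>
      (Fin.prod_filter_sub_le_val_le_prod_comp_of_injective hmono hμ0
        (σ.symm.injective.comp hf)).trans_eq (by simp [hσ])
    simpa only [hV, hU, det_one, mul_one] using
      mul_det_transpose_mul_le_det_transpose_mul_diagonal_mul V hH.eigenvalues hweights
  have hdet : (Pᵀ * P).det = high * low := by
    simp_rw [low, high, ← not_lt, mul_comm, prod_filter_mul_prod_filter_not,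
      hH.det_eq_prod_eigenvalues, hσ, RCLike.ofReal_real_eq_id, id, Equiv.prod_comp σ]
  exact ⟨le_trans (div_le_of_le_mul₀ (prod_nonneg fun k _ => hμ0 k)
    (prod_nonneg fun k _ => hμ0 k) hdet.le) hhigh, hhigh⟩

/-- Let `P ∈ ℝ^{q'×q}` have rank `q` (`q' ≥ q`) and `U ∈ ℝ^{q×p}` have
orthonormal columns (`p ≤ q`). If `μ` enumerates the eigenvalues of `PᵀP` in
decreasing order, then `det((PU)ᵀ(PU)) ≥ det(PᵀP) / ∏_{k=1}^{q−p} μ_k`;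
equivalently `det((PU)ᵀ(PU)) ≥ ∏_{k=q−p+1}^{q} μ_k`. -/
theorem det_PU_ge {q q' p : ℕ} (hq : q ≤ q') (hpq : p ≤ q)
    (P : Matrix (Fin q') (Fin q) ℝ) (hP : P.rank = q)
    (U : Matrix (Fin q) (Fin p) ℝ) (hU : Uᵀ * U = 1)
    (hH : (Pᵀ * P).IsHermitian)
    (μ : Fin q → ℝ) (hmono : Antitone μ)
    (hperm : ∃ σ : Equiv.Perm (Fin q), ∀ i, μ i = hH.eigenvalues (σ i)) :
    ((P * U)ᵀ * (P * U)).det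
        ≥ (Pᵀ * P).det / ∏ k ∈ Finset.univ.filter (fun k : Fin q => k.1 < q - p), μ k
    ∧ ((P * U)ᵀ * (P * U)).det
        ≥ ∏ k ∈ Finset.univ.filter (fun k : Fin q => q - p ≤ k.1), μ k :=
  det_PU_ge_general P U hU hH μ hmono hperm
end
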